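/- (Subgradient bound, Lemma 3.2.) In the block composite setting, fix x ∈ E, a block index i, and β > 0. Let s₊ be a global minimizer over ℝ^{n_i} of q_β(s) = φ̄^i(s;x) + (β/2)‖s − x^i‖² and set x₊ = x[i↦s₊]. Let C ⊆ E be a convex set containing x and x₊, suppose ∇_i f is L^f_i-Lipschitz on C and ∇_i F is L^F_i-Lipschitz on C (operator norm), suppose ‖∇_i F(x)‖ ≤ M (operator norm), and assume φ(x₊) ≤ φ(x). Then there exists a subgradient v of g_i at s₊ (i.e. g_i(t) ≥ g_i(s₊) + ⟨v, t − s₊⟩ for all t) such that ‖∇_i f(x₊) + (∇_i F(x₊))^T ∇h(F(x₊)) + v‖ ≤ (L^f_i + L^F_i √(2 L_h (φ(x) − φ^*)) + β)‖x₊ − x‖ + (L_h M L^F_i/2)‖x₊ − x‖². -/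

import Mathlib

open scoped RealInnerProductSpace

/-- `upd x i s` is `x` with its `i`-th block replaced by `s`, in the Euclidean
product space `E = ℝ^{n 0} × ⋯ × ℝ^{n (b-1)}`. -/
noncomputable def upd {b : ℕ} {n : Fin b → ℕ}
    (x : PiLp 2 (fun i => EuclideanSpace ℝ (Fin (n i)))) (i : Fin b)
    (s : EuclideanSpace ℝ (Fin (n i))) :
    PiLp 2 (fun i => EuclideanSpace ℝ (Fin (n i))) :=
  WithLp.toLp 2 (Function.update x i s)

/-
First-order optimality of `s₊` for the model "smooth part + `gᵢ`" makes
`v = -(∇ᵢf(x) + ∇ᵢF(x)ᵀ ∇h(ℓ) + β (s₊ - xⁱ))`, with `ℓ = F(x) + ∇ᵢF(x)(s₊ - xⁱ)`, a subgradient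
of `gᵢ` at `s₊`. The residual then splits into `∇ᵢf(x₊) - ∇ᵢf(x)`, `(∇ᵢF(x₊) - ∇ᵢF(x))ᵀ ∇h(F(x₊))`,
`∇ᵢF(x)ᵀ (∇h(F(x₊)) - ∇h(ℓ))` and `β (s₊ - xⁱ)`. The first two are controlled by the Lipschitz
constants, using `‖∇h(u)‖² ≤ 2 L_h (h(u) - h^*) ≤ 2 L_h (φ(x) - φ^*)` (a descent step of length
`1 / L_h` from `u`, together with `φ(x₊) ≤ φ(x)`); the third by the first-order Taylor remainder
`‖F(x₊) - ℓ‖ ≤ L^F_i / 2 ‖s₊ - xⁱ‖²`.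
-/

open Set

section Calculus

variable {E W : Type*} [NormedAddCommGroup E] [NormedSpace ℝ E]
  [NormedAddCommGroup W] [NormedSpace ℝ W]

theorem norm_image_sub_sub_fderiv_le {f : E → W} {f' : E → E →L[ℝ] W} {x y : E} {K : ℝ}
    (hf : ∀ z ∈ segment ℝ x y, HasFDerivAt f (f' z) z)
    (hlip : ∀ z ∈ segment ℝ x y, ‖f' z - f' x‖ ≤ K * ‖z - x‖) :
    ‖f y - f x - f' x (y - x)‖ ≤ K / 2 * ‖y - x‖ ^ 2 := by
  set d := y - x
  have hmem : ∀ t ∈ Icc (0 : ℝ) 1, x + t • d ∈ segment ℝ x y := fun t ht => by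
    rw [segment_eq_image']; exact ⟨t, ht, rfl⟩
  have hγ : ∀ t ∈ Icc (0 : ℝ) 1, HasDerivAt (fun t : ℝ => f (x + t • d) - f x - t • f' x d)
      (f' (x + t • d) d - f' x d) t := fun t ht => by
    have hpath : HasDerivAt (fun t : ℝ => x + t • d) d t := by
      simpa using ((hasDerivAt_id t).smul_const d).const_add x
    exact (((hf _ (hmem t ht)).comp_hasDerivAt t hpath).sub_const _).sub
      (by simpa using (hasDerivAt_id t).smul_const (f' x d))
  have key := image_norm_le_of_norm_deriv_right_le_deriv_boundary
    (f := fun t : ℝ => f (x + t • d) - f x - t • f' x d) (a := 0) (b := 1)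
    (B := fun t => K * ‖d‖ ^ 2 / 2 * t ^ 2) (B' := fun t => K * ‖d‖ ^ 2 * t)
    (fun t ht => (hγ t ht).continuousAt.continuousWithinAt)
    (fun t ht => (hγ t (Ico_subset_Icc_self ht)).hasDerivWithinAt)
    (by simp)
    (fun t => ((hasDerivAt_pow 2 t).const_mul (K * ‖d‖ ^ 2 / 2)).congr_deriv (by ring))
    (fun t ht => by
      have ht' := Ico_subset_Icc_self ht
      calc ‖f' (x + t • d) d - f' x d‖ = ‖(f' (x + t • d) - f' x) d‖ := rfl
        _ ≤ ‖f' (x + t • d) - f' x‖ * ‖d‖ := ContinuousLinearMap.le_opNorm _ _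
        _ ≤ K * ‖x + t • d - x‖ * ‖d‖ := by gcongr; exact hlip _ (hmem t ht')
        _ = K * ‖d‖ ^ 2 * t := by
          rw [add_sub_cancel_left, norm_smul, Real.norm_of_nonneg ht'.1]; ring)
    (right_mem_Icc.2 zero_le_one)
  simpa [d, mul_div_right_comm] using key

end Calculus

section Hilbert

variable {V W : Type*} [NormedAddCommGroup V] [InnerProductSpace ℝ V]
  [NormedAddCommGroup W] [InnerProductSpace ℝ W]

def IsSubgradient (g : V → ℝ) (s v : V) : Prop := ∀ t, g s + ⟪v, t - s⟫ ≤ g t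

variable [CompleteSpace V] [CompleteSpace W]

theorem ConvexOn.isSubgradient_neg_of_hasGradientAt_of_isMin {ψ g : V → ℝ} {s G : V}
    (hg : ConvexOn ℝ univ g) (hψ : HasGradientAt ψ G s)
    (hmin : ∀ t, ψ s + g s ≤ ψ t + g t) : IsSubgradient g s (-G) := by
  intro t
  set d := t - s
  -- `r ↦ ψ (s + r • d) + r (g t - g s)` majorizes `ψ + g` along `[s, t]`, so it is minimal at `0`.
  set k : ℝ → ℝ := fun r => ψ (s + r • d) + r * (g t - g s)
  have hk : HasDerivAt k (⟪G, d⟫ + (g t - g s)) 0 := by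
    have hpath : HasDerivAt (fun r : ℝ => s + r • d) d 0 := by
      simpa using ((hasDerivAt_id (0 : ℝ)).smul_const d).const_add s
    have hψ' := (hasGradientAt_iff_hasFDerivAt.1 hψ).comp_hasDerivAt_of_eq 0 hpath (by simp)
    exact hψ'.add (by simpa using (hasDerivAt_id (0 : ℝ)).mul_const (g t - g s))
  have hkmin : IsMinOn k (Icc 0 1) 0 := fun r hr => by
    have hconv := hg.2 (mem_univ s) (mem_univ t) (sub_nonneg.2 hr.2) hr.1 (sub_add_cancel 1 r)
    have hseg : (1 - r) • s + r • t = s + r • d := by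
      simp only [d, smul_sub, sub_smul, one_smul]; abel
    rw [hseg, smul_eq_mul, smul_eq_mul] at hconv
    have := hmin (s + r • d)
    show k 0 ≤ k r
    simp only [k, zero_smul, add_zero, zero_mul]
    linarith
  have hk_nonneg : 0 ≤ ⟪G, d⟫ + (g t - g s) := by
    simpa using hkmin.localize.hasFDerivWithinAt_nonneg (y := 1)
      hk.hasFDerivAt.hasFDerivWithinAt
      (mem_posTangentConeAt_of_segment_subset (by simp [segment_eq_Icc]))
  rw [inner_neg_left]
  linarith

theorem sq_norm_gradient_le {h : V → ℝ} {gradh : V → V} {L hstar : ℝ} (hL : 0 < L)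
    (hgrad : ∀ u, HasGradientAt h (gradh u) u)
    (hlip : ∀ u v, ‖gradh u - gradh v‖ ≤ L * ‖u - v‖) (hlow : ∀ u, hstar ≤ h u) (u : V) :
    ‖gradh u‖ ^ 2 ≤ 2 * L * (h u - hstar) := by
  set w := -L⁻¹ • gradh u
  have hdescent := norm_image_sub_sub_fderiv_le (x := u) (y := u + w) (K := L)
    (f' := fun z => InnerProductSpace.toDual ℝ V (gradh z))
    (fun z _ => hasGradientAt_iff_hasFDerivAt.1 (hgrad z))
    (fun z _ => by rw [← map_sub, LinearIsometryEquiv.norm_map]; exact hlip z u)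
  rw [add_sub_cancel_left, InnerProductSpace.toDual_apply_apply, Real.norm_eq_abs] at hdescent
  have hinner : ⟪gradh u, w⟫ = -L⁻¹ * ‖gradh u‖ ^ 2 := by
    rw [real_inner_smul_right, real_inner_self_eq_norm_sq]
  have hnorm : ‖w‖ ^ 2 = L⁻¹ ^ 2 * ‖gradh u‖ ^ 2 := by
    rw [norm_smul, norm_neg, norm_inv, Real.norm_of_nonneg hL.le, mul_pow]
  rw [hinner, hnorm] at hdescent
  have hstep : h (u + w) ≤ h u - ‖gradh u‖ ^ 2 / (2 * L) := by
    have hcoef : L / 2 * (L⁻¹ ^ 2 * ‖gradh u‖ ^ 2) - L⁻¹ * ‖gradh u‖ ^ 2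
        = -(‖gradh u‖ ^ 2 / (2 * L)) := by
      field_simp; ring
    linarith [(abs_le.1 hdescent).2]
  calc ‖gradh u‖ ^ 2 = 2 * L * (‖gradh u‖ ^ 2 / (2 * L)) := by field_simp
    _ ≤ 2 * L * (h u - hstar) := by gcongr; linarith [hlow (u + w)]

theorem hasGradientAt_regularizedModel {h : W → ℝ} (a x₀ : V) (c : W) (A : V →L[ℝ] W) (β : ℝ)
    {s : V} {gh : W} (hh : HasGradientAt h gh (c + A (s - x₀))) :
    HasGradientAt (fun t => ⟪a, t - x₀⟫ + h (c + A (t - x₀)) + β / 2 * ‖t - x₀‖ ^ 2)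
      (a + ContinuousLinearMap.adjoint A gh + β • (s - x₀)) s := by
  rw [hasGradientAt_iff_hasFDerivAt] at hh ⊢
  have hsub : HasFDerivAt (fun t : V => t - x₀) (ContinuousLinearMap.id ℝ V) s :=
    (hasFDerivAt_id s).sub_const x₀
  have hlin := (innerSL ℝ a).hasFDerivAt.comp s hsub
  have hcomp := hh.comp s ((A.hasFDerivAt.comp s hsub).const_add c)
  have hsq := hsub.norm_sq.const_mul (β / 2)
  refine ((hlin.add hcomp).add hsq).congr_fderiv ?_
  ext v
  simp [ContinuousLinearMap.adjoint_inner_left]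
  ring

theorem norm_add_adjoint_sub_le (g₁ g₀ : V) (A₁ A₀ : V →L[ℝ] W) (u₁ u₀ : W) (β : ℝ) (d : V) :
    ‖g₁ + ContinuousLinearMap.adjoint A₁ u₁
        + -(g₀ + ContinuousLinearMap.adjoint A₀ u₀ + β • d)‖
      ≤ ‖g₁ - g₀‖ + ‖A₁ - A₀‖ * ‖u₁‖ + ‖A₀‖ * ‖u₁ - u₀‖ + |β| * ‖d‖ := by
  have hsplit : g₁ + ContinuousLinearMap.adjoint A₁ u₁
        + -(g₀ + ContinuousLinearMap.adjoint A₀ u₀ + β • d)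
      = (g₁ - g₀) + ContinuousLinearMap.adjoint (A₁ - A₀) u₁
        + ContinuousLinearMap.adjoint A₀ (u₁ - u₀) + -(β • d) := by
    simp only [map_sub, sub_apply]; abel
  have hadj : ∀ (B : V →L[ℝ] W) (u : W), ‖ContinuousLinearMap.adjoint B u‖ ≤ ‖B‖ * ‖u‖ :=
    fun B u => ((ContinuousLinearMap.adjoint B).le_opNorm u).trans_eq
      (by rw [LinearIsometryEquiv.norm_map])
  rw [hsplit]
  calc _ ≤ ‖g₁ - g₀‖ + ‖ContinuousLinearMap.adjoint (A₁ - A₀) u₁‖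
        + ‖ContinuousLinearMap.adjoint A₀ (u₁ - u₀)‖ + ‖-(β • d)‖ := norm_add₄_le
    _ ≤ _ := by rw [norm_neg, norm_smul, Real.norm_eq_abs]; gcongr <;> exact hadj _ _

end Hilbert

section Block

variable {b : ℕ} {n : Fin b → ℕ}

local notation "𝔼" => PiLp 2 (fun i => EuclideanSpace ℝ (Fin (n i)))

@[simp]
theorem upd_apply_self (x : 𝔼) (i : Fin b) (s : EuclideanSpace ℝ (Fin (n i))) :
    upd x i s i = s := by
  simp [upd]

@[simp]
theorem upd_self (x : 𝔼) (i : Fin b) : upd x i (x i) = x := by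
  simp [upd]

@[simp]
theorem upd_upd (x : 𝔼) (i : Fin b) (s t : EuclideanSpace ℝ (Fin (n i))) :
    upd (upd x i s) i t = upd x i t := by
  simp [upd]

theorem norm_upd_sub_upd (x : 𝔼) (i : Fin b) (s t : EuclideanSpace ℝ (Fin (n i))) :
    ‖upd x i s - upd x i t‖ = ‖s - t‖ := by
  have : upd x i s - upd x i t = PiLp.single 2 i (s - t) := by
    ext j : 1
    rcases eq_or_ne j i with rfl | hj
    · simp [upd]
    · simp [upd, Function.update_of_ne hj, Pi.single_eq_of_ne hj]
  rw [this, PiLp.norm_single]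

theorem norm_upd_sub_self (x : 𝔼) (i : Fin b) (s : EuclideanSpace ℝ (Fin (n i))) :
    ‖upd x i s - x‖ = ‖s - x i‖ := by
  simpa using norm_upd_sub_upd x i s (x i)

theorem upd_mem_segment {x : 𝔼} {i : Fin b} {s z : EuclideanSpace ℝ (Fin (n i))}
    (hz : z ∈ segment ℝ (x i) s) : upd x i z ∈ segment ℝ x (upd x i s) := by
  obtain ⟨a, c, ha, hc, hac, rfl⟩ := hz
  refine ⟨a, c, ha, hc, hac, ?_⟩
  ext j : 1
  rcases eq_or_ne j i with rfl | hj
  · simp [upd]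
  · simp [upd, Function.update_of_ne hj, ← add_smul, hac]

theorem norm_sub_sub_blockFDeriv_le {W : Type*} [NormedAddCommGroup W] [NormedSpace ℝ W]
    {F : 𝔼 → W} {i : Fin b} {GiF : 𝔼 → EuclideanSpace ℝ (Fin (n i)) →L[ℝ] W} {C : Set 𝔼}
    {L : ℝ} {x : 𝔼} {s : EuclideanSpace ℝ (Fin (n i))}
    (hGiF : ∀ y, HasFDerivAt (fun s => F (upd y i s)) (GiF y) (y i))
    (hC : Convex ℝ C) (hxC : x ∈ C) (hsC : upd x i s ∈ C)
    (hLip : ∀ y ∈ C, ∀ z ∈ C, ‖GiF y - GiF z‖ ≤ L * ‖y - z‖) :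
    ‖F (upd x i s) - (F x + GiF x (s - x i))‖ ≤ L / 2 * ‖s - x i‖ ^ 2 := by
  have hseg : ∀ z ∈ segment ℝ (x i) s, upd x i z ∈ C :=
    fun z hz => hC.segment_subset hxC hsC (upd_mem_segment hz)
  have key := norm_image_sub_sub_fderiv_le (x := x i) (y := s) (K := L)
    (f := fun s => F (upd x i s)) (f' := fun z => GiF (upd x i z))
    (fun z _ => by simpa using hGiF (upd x i z))
    (fun z hz => by rw [upd_self, ← norm_upd_sub_self]; exact hLip _ (hseg z hz) x hxC)
  simp only [upd_self] at key
  rwa [sub_sub] at key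

end Block

theorem subgradient_bound_general
    {b m : ℕ} {n : Fin b → ℕ}
    (f : PiLp 2 (fun i => EuclideanSpace ℝ (Fin (n i))) → ℝ)
    (F : PiLp 2 (fun i => EuclideanSpace ℝ (Fin (n i))) → EuclideanSpace ℝ (Fin m))
    (h : EuclideanSpace ℝ (Fin m) → ℝ)
    (Lh : ℝ) (hLh : 0 < Lh)
    (gradh : EuclideanSpace ℝ (Fin m) → EuclideanSpace ℝ (Fin m))
    (hgradh : ∀ u, HasGradientAt h (gradh u) u)
    (hgradhLip : ∀ u v, ‖gradh u - gradh v‖ ≤ Lh * ‖u - v‖)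
    (g : (i : Fin b) → EuclideanSpace ℝ (Fin (n i)) → ℝ)
    (hg : ∀ i, ConvexOn ℝ Set.univ (g i))
    -- lower bounds `f ≥ f^*`, `h ≥ h^*`, `Σᵢ gᵢ ≥ g^*`; `φ^* = f^* + h^* + g^*`
    (fstar hstar gstar : ℝ)
    (hfstar : ∀ y, fstar ≤ f y) (hhstar : ∀ u, hstar ≤ h u)
    (hgstar : ∀ y : PiLp 2 (fun i => EuclideanSpace ℝ (Fin (n i))), gstar ≤ ∑ j, g j (y j))
    (x : PiLp 2 (fun i => EuclideanSpace ℝ (Fin (n i)))) (i : Fin b)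
    (β Lf LF M : ℝ) (hβ : 0 < β)
    -- `gif y = ∇_i f(y)`, the gradient at `y^i` of `s ↦ f(y[i ↦ s])`
    (gif : PiLp 2 (fun i => EuclideanSpace ℝ (Fin (n i))) → EuclideanSpace ℝ (Fin (n i)))
    -- `GiF y = ∇_i F(y)`, the Fréchet derivative at `y^i` of `s ↦ F(y[i ↦ s])`
    (GiF : PiLp 2 (fun i => EuclideanSpace ℝ (Fin (n i))) →
      (EuclideanSpace ℝ (Fin (n i)) →L[ℝ] EuclideanSpace ℝ (Fin m)))
    (hGiF : ∀ y, HasFDerivAt (fun s => F (upd y i s)) (GiF y) (y i))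
    -- `sp` is a global minimizer of `q_β(s) = φ̄^i(s;x) + (β/2)‖s − x^i‖²`
    (sp : EuclideanSpace ℝ (Fin (n i)))
    (hmin : ∀ t,
      (f x + ⟪gif x, sp - x i⟫ + h (F x + GiF x (sp - x i)) + g i sp)
          + β / 2 * ‖sp - x i‖ ^ 2
        ≤ (f x + ⟪gif x, t - x i⟫ + h (F x + GiF x (t - x i)) + g i t)
          + β / 2 * ‖t - x i‖ ^ 2)
    -- `C` is a convex set containing `x` and `x₊ = x[i ↦ sp]`, on which the block
    -- gradients of `f` and `F` are Lipschitz
    (C : Set (PiLp 2 (fun i => EuclideanSpace ℝ (Fin (n i)))))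
    (hC : Convex ℝ C) (hxC : x ∈ C) (hxpC : upd x i sp ∈ C)
    (hgifLip : ∀ y ∈ C, ∀ z ∈ C, ‖gif y - gif z‖ ≤ Lf * ‖y - z‖)
    (hGiFLip : ∀ y ∈ C, ∀ z ∈ C, ‖GiF y - GiF z‖ ≤ LF * ‖y - z‖)
    -- operator-norm bound `‖∇_i F(x)‖ ≤ M`
    (hM : ‖GiF x‖ ≤ M)
    -- decrease assumption `φ(x₊) ≤ φ(x)`
    (hdec : f (upd x i sp) + h (F (upd x i sp)) + ∑ j, g j (upd x i sp j)
        ≤ f x + h (F x) + ∑ j, g j (x j)) :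
    ∃ v : EuclideanSpace ℝ (Fin (n i)),
      (∀ t, g i sp + ⟪v, t - sp⟫ ≤ g i t) ∧
      ‖gif (upd x i sp)
          + ContinuousLinearMap.adjoint (GiF (upd x i sp)) (gradh (F (upd x i sp)))
          + v‖
        ≤ (Lf + LF * Real.sqrt (2 * Lh *
              ((f x + h (F x) + ∑ j, g j (x j)) - (fstar + hstar + gstar))) + β)
            * ‖upd x i sp - x‖
          + Lh * M * LF / 2 * ‖upd x i sp - x‖ ^ 2 := by
  set l := F x + GiF x (sp - x i)
  have hsub : IsSubgradient (g i) sp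
      (-(gif x + ContinuousLinearMap.adjoint (GiF x) (gradh l) + β • (sp - x i))) :=
    (hg i).isSubgradient_neg_of_hasGradientAt_of_isMin
      (hasGradientAt_regularizedModel (gif x) (x i) (F x) (GiF x) β (hgradh l))
      fun t => by linarith [hmin t]
  refine ⟨_, hsub, ?_⟩
  have hrem : ‖F (upd x i sp) - l‖ ≤ LF / 2 * ‖sp - x i‖ ^ 2 :=
    norm_sub_sub_blockFDeriv_le hGiF hC hxC hxpC hGiFLip
  have hgrad : ‖gradh (F (upd x i sp))‖ ≤ √(2 * Lh *
      ((f x + h (F x) + ∑ j, g j (x j)) - (fstar + hstar + gstar))) := by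
    refine Real.le_sqrt_of_sq_le ((sq_norm_gradient_le hLh hgradh hgradhLip hhstar _).trans ?_)
    exact mul_le_mul_of_nonneg_left
      (by linarith [hfstar (upd x i sp), hgstar (upd x i sp)]) (by positivity)
  have hLF : 0 ≤ LF * ‖upd x i sp - x‖ := (norm_nonneg _).trans (hGiFLip _ hxpC x hxC)
  have hM0 : 0 ≤ M := (norm_nonneg _).trans hM
  calc _ ≤ _ := norm_add_adjoint_sub_le _ _ _ _ _ _ _ _
    _ ≤ Lf * ‖upd x i sp - x‖ + LF * ‖upd x i sp - x‖ * √(2 * Lh *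
          ((f x + h (F x) + ∑ j, g j (x j)) - (fstar + hstar + gstar)))
        + M * (Lh * (LF / 2 * ‖sp - x i‖ ^ 2)) + β * ‖sp - x i‖ := by
      rw [abs_of_pos hβ]
      gcongr
      · exact hgifLip _ hxpC x hxC
      · exact hGiFLip _ hxpC x hxC
      · exact (hgradhLip _ _).trans (by gcongr)
    _ = _ := by rw [norm_upd_sub_self]; ring

/-- subgradient bound, Lemma 3.2: at a global minimizer `sp` of the
regularized block model, with `x₊ = x[i ↦ sp]` and `φ(x₊) ≤ φ(x)`, there is a
subgradient `v` of `g_i` at `sp` with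
`‖∇_i f(x₊) + (∇_i F(x₊))ᵀ ∇h(F(x₊)) + v‖
  ≤ (L^f_i + L^F_i √(2L_h(φ(x) − φ^*)) + β)‖x₊ − x‖ + (L_h M L^F_i/2)‖x₊ − x‖²`. -/
theorem subgradient_bound
    {b m : ℕ} (hb : 0 < b) (hm : 0 < m) {n : Fin b → ℕ} (hn : ∀ i, 0 < n i)
    (f : PiLp 2 (fun i => EuclideanSpace ℝ (Fin (n i))) → ℝ)
    (hf : Differentiable ℝ f)
    (F : PiLp 2 (fun i => EuclideanSpace ℝ (Fin (n i))) → EuclideanSpace ℝ (Fin m))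
    (hF : Differentiable ℝ F)
    (h : EuclideanSpace ℝ (Fin m) → ℝ)
    (hhconv : ConvexOn ℝ Set.univ h) (hhdiff : Differentiable ℝ h)
    (Lh : ℝ) (hLh : 0 < Lh)
    (gradh : EuclideanSpace ℝ (Fin m) → EuclideanSpace ℝ (Fin m))
    (hgradh : ∀ u, HasGradientAt h (gradh u) u)
    (hgradhLip : ∀ u v, ‖gradh u - gradh v‖ ≤ Lh * ‖u - v‖)
    (g : (i : Fin b) → EuclideanSpace ℝ (Fin (n i)) → ℝ)
    (hg : ∀ i, ConvexOn ℝ Set.univ (g i))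
    -- lower bounds `f ≥ f^*`, `h ≥ h^*`, `Σᵢ gᵢ ≥ g^*`; `φ^* = f^* + h^* + g^*`
    (fstar hstar gstar : ℝ)
    (hfstar : ∀ y, fstar ≤ f y) (hhstar : ∀ u, hstar ≤ h u)
    (hgstar : ∀ y : PiLp 2 (fun i => EuclideanSpace ℝ (Fin (n i))), gstar ≤ ∑ j, g j (y j))
    (x : PiLp 2 (fun i => EuclideanSpace ℝ (Fin (n i)))) (i : Fin b)
    (β Lf LF M : ℝ) (hβ : 0 < β)
    -- `gif y = ∇_i f(y)`, the gradient at `y^i` of `s ↦ f(y[i ↦ s])`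
    (gif : PiLp 2 (fun i => EuclideanSpace ℝ (Fin (n i))) → EuclideanSpace ℝ (Fin (n i)))
    (hgif : ∀ y, HasGradientAt (fun s => f (upd y i s)) (gif y) (y i))
    -- `GiF y = ∇_i F(y)`, the Fréchet derivative at `y^i` of `s ↦ F(y[i ↦ s])`
    (GiF : PiLp 2 (fun i => EuclideanSpace ℝ (Fin (n i))) →
      (EuclideanSpace ℝ (Fin (n i)) →L[ℝ] EuclideanSpace ℝ (Fin m)))
    (hGiF : ∀ y, HasFDerivAt (fun s => F (upd y i s)) (GiF y) (y i))
    -- `sp` is a global minimizer of `q_β(s) = φ̄^i(s;x) + (β/2)‖s − x^i‖²`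
    (sp : EuclideanSpace ℝ (Fin (n i)))
    (hmin : ∀ t,
      (f x + ⟪gif x, sp - x i⟫ + h (F x + GiF x (sp - x i)) + g i sp)
          + β / 2 * ‖sp - x i‖ ^ 2
        ≤ (f x + ⟪gif x, t - x i⟫ + h (F x + GiF x (t - x i)) + g i t)
          + β / 2 * ‖t - x i‖ ^ 2)
    -- `C` is a convex set containing `x` and `x₊ = x[i ↦ sp]`, on which the block
    -- gradients of `f` and `F` are Lipschitz
    (C : Set (PiLp 2 (fun i => EuclideanSpace ℝ (Fin (n i)))))
    (hC : Convex ℝ C) (hxC : x ∈ C) (hxpC : upd x i sp ∈ C)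
    (hgifLip : ∀ y ∈ C, ∀ z ∈ C, ‖gif y - gif z‖ ≤ Lf * ‖y - z‖)
    (hGiFLip : ∀ y ∈ C, ∀ z ∈ C, ‖GiF y - GiF z‖ ≤ LF * ‖y - z‖)
    -- operator-norm bound `‖∇_i F(x)‖ ≤ M`
    (hM : ‖GiF x‖ ≤ M)
    -- decrease assumption `φ(x₊) ≤ φ(x)`
    (hdec : f (upd x i sp) + h (F (upd x i sp)) + ∑ j, g j (upd x i sp j)
        ≤ f x + h (F x) + ∑ j, g j (x j)) :
    ∃ v : EuclideanSpace ℝ (Fin (n i)),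
      (∀ t, g i sp + ⟪v, t - sp⟫ ≤ g i t) ∧
      ‖gif (upd x i sp)
          + ContinuousLinearMap.adjoint (GiF (upd x i sp)) (gradh (F (upd x i sp)))
          + v‖
        ≤ (Lf + LF * Real.sqrt (2 * Lh *
              ((f x + h (F x) + ∑ j, g j (x j)) - (fstar + hstar + gstar))) + β)
            * ‖upd x i sp - x‖
          + Lh * M * LF / 2 * ‖upd x i sp - x‖ ^ 2 :=
  subgradient_bound_general f F h Lh hLh gradh hgradh hgradhLip g hg fstar hstar gstar hfstar hhstar
    hgstar x i β Lf LF M hβ gif GiF hGiF sp hmin C hC hxC hxpC hgifLip hGiFLip hM hdec
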